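/- Let (Ω, P) be a probability space, let N = (N_1, ..., N_m) be a vector of square-integrable real random variables with E[N_i] = 0 and positive-definite covariance matrix K_2, let ν ∈ ℝ^m, let λ > 0, and set K_1 = K_2 + λ^2 νν^T and SNR_a = det(K_1)/det(K_2) − 1. Then there exists a vector w* ∈ ℝ^m such that for every real random variable X' independent of N with E[X'] = 0 and E[(X')^2] ≤ λ^2, one has E[(w*^T (νX' + N) − X')^2] ≤ λ^2 / (1 + SNR_a). -/

import Mathlib

/-!
Take `w = λ² K₁⁻¹ ν` and `t = ν ⬝ w`. The estimation error `wᵀ(νX + N) − X` is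
`(t − 1) X + wᵀN`, and independence removes the cross term, so the mean squared error is
`(1 − t)² E[X²] + wᵀ K₂ w`. As `K₂ = K₁ − λ² ννᵀ`, we get `K₂ w = λ²(1 − t) ν`, so the error is at
most `(1 − t)² λ² + λ²(1 − t) t = λ²(1 − t)`, and the matrix determinant lemma
`det K₂ = (1 − t) det K₁` identifies this with `λ² / (1 + SNR_a)`.
-/

open MeasureTheory ProbabilityTheory Matrix

namespace Matrix

variable {n α : Type*} [Fintype n] [DecidableEq n] [CommRing α]

theorem det_add_vecMulVec {A : Matrix n n α} (hA : IsUnit A.det) (u v : n → α) :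
    (A + vecMulVec u v).det = A.det * (1 + v ⬝ᵥ A⁻¹ *ᵥ u) := by
  rw [vecMulVec_eq Unit, det_add_replicateCol_mul_replicateRow hA, Matrix.mul_assoc,
    ← replicateCol_mulVec, det_unique (1 + _ : Matrix Unit Unit α), add_apply, one_apply_eq,
    replicateRow_mul_replicateCol_apply]

theorem det_sub_smul_vecMulVec {A : Matrix n n α} (hA : IsUnit A.det) (c : α) (v : n → α) :
    (A - c • vecMulVec v v).det = A.det * (1 - v ⬝ᵥ c • A⁻¹ *ᵥ v) := by
  rw [sub_eq_add_neg, ← neg_smul, ← smul_vecMulVec, det_add_vecMulVec hA, mulVec_smul,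
    neg_smul, dotProduct_neg, sub_eq_add_neg]

theorem sub_smul_vecMulVec_mulVec_smul_inv_mulVec {A : Matrix n n α} (hA : IsUnit A.det)
    (c : α) (v : n → α) :
    (A - c • vecMulVec v v) *ᵥ (c • A⁻¹ *ᵥ v) = (c * (1 - v ⬝ᵥ c • A⁻¹ *ᵥ v)) • v := by
  rw [sub_mulVec, smul_mulVec, vecMulVec_mulVec, mulVec_smul, mulVec_mulVec,
    mul_nonsing_inv _ hA, one_mulVec, op_smul_eq_smul, smul_smul, mul_sub, mul_one, sub_smul]

end Matrix

section SecondMoments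

variable {Ω ι : Type*} [MeasurableSpace Ω] {μ : Measure Ω}

theorem integral_sq_sum_mul_eq_dotProduct_mulVec [Fintype ι] {N : ι → Ω → ℝ}
    (hN : ∀ i, MemLp (N i) 2 μ) (w : ι → ℝ) :
    ∫ ω, (∑ i, w i * N i ω) ^ 2 ∂μ
      = w ⬝ᵥ (Matrix.of fun i j => ∫ ω, N i ω * N j ω ∂μ) *ᵥ w := by
  have hNN : ∀ i j, Integrable (fun ω => w i * w j * (N i ω * N j ω)) μ := fun i j =>
    ((hN i).integrable_mul (hN j)).const_mul _
  have hpt : ∀ ω, (∑ i, w i * N i ω) ^ 2 = ∑ i, ∑ j, w i * w j * (N i ω * N j ω) := fun ω => by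
    rw [sq, Finset.sum_mul_sum]
    exact Finset.sum_congr rfl fun i _ => Finset.sum_congr rfl fun j _ => by ring
  simp_rw [hpt]
  rw [integral_finsetSum _ fun i _ => integrable_finsetSum _ fun j _ => hNN i j]
  simp_rw [integral_finsetSum _ fun j _ => hNN _ j, integral_const_mul]
  simp only [dotProduct, mulVec, of_apply, Finset.mul_sum]
  exact Finset.sum_congr rfl fun i _ => Finset.sum_congr rfl fun j _ => by ring

theorem integral_sq_mul_add_of_indepFun {X Y : Ω → ℝ} (hX : MemLp X 2 μ) (hY : MemLp Y 2 μ)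
    (hXY : IndepFun X Y μ) (hX0 : ∫ ω, X ω ∂μ = 0) (a : ℝ) :
    ∫ ω, (a * X ω + Y ω) ^ 2 ∂μ = a ^ 2 * ∫ ω, X ω ^ 2 ∂μ + ∫ ω, Y ω ^ 2 ∂μ := by
  have hXY0 : ∫ ω, X ω * Y ω ∂μ = 0 := by
    rw [hXY.integral_fun_mul_eq_mul_integral hX.1 hY.1, hX0, zero_mul]
  have hexp : (fun ω => (a * X ω + Y ω) ^ 2)
      = fun ω => a ^ 2 * X ω ^ 2 + 2 * a * (X ω * Y ω) + Y ω ^ 2 := by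
    funext ω; ring
  have hX2 : Integrable (fun ω => a ^ 2 * X ω ^ 2) μ := hX.integrable_sq.const_mul _
  have hcross : Integrable (fun ω => 2 * a * (X ω * Y ω)) μ :=
    (hX.integrable_mul hY).const_mul _
  have hX2cross : Integrable (fun ω => a ^ 2 * X ω ^ 2 + 2 * a * (X ω * Y ω)) μ :=
    hX2.add hcross
  rw [hexp, integral_add hX2cross hY.integrable_sq, integral_add hX2 hcross,
    integral_const_mul, integral_const_mul, hXY0, mul_zero, add_zero]

theorem integral_sq_linear_estimator_error [Fintype ι] {X : Ω → ℝ} {N : ι → Ω → ℝ}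
    (hX : MemLp X 2 μ) (hN : ∀ i, MemLp (N i) 2 μ) (hXN : IndepFun X (fun ω i => N i ω) μ)
    (hX0 : ∫ ω, X ω ∂μ = 0) (ν w : ι → ℝ) :
    ∫ ω, ((∑ i, w i * (ν i * X ω + N i ω)) - X ω) ^ 2 ∂μ
      = (ν ⬝ᵥ w - 1) ^ 2 * ∫ ω, X ω ^ 2 ∂μ
        + w ⬝ᵥ (Matrix.of fun i j => ∫ ω, N i ω * N j ω ∂μ) *ᵥ w := by
  have hpt : ∀ ω, (∑ i, w i * (ν i * X ω + N i ω)) - X ω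
      = (ν ⬝ᵥ w - 1) * X ω + ∑ i, w i * N i ω := fun ω => by
    have hνw : ∑ i, w i * (ν i * X ω) = ν ⬝ᵥ w * X ω := by
      simp only [dotProduct, Finset.sum_mul]
      exact Finset.sum_congr rfl fun i _ => by ring
    simp only [mul_add, Finset.sum_add_distrib, hνw]
    ring
  have hY : MemLp (fun ω => ∑ i, w i * N i ω) 2 μ :=
    memLp_finsetSum _ fun i _ => (hN i).const_mul (w i)
  have hXY : IndepFun X (fun ω => ∑ i, w i * N i ω) μ :=
    hXN.comp measurable_id (by fun_prop : Measurable fun v : ι → ℝ => ∑ i, w i * v i)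
  simp_rw [hpt]
  rw [integral_sq_mul_add_of_indepFun hX hY hXY hX0, integral_sq_sum_mul_eq_dotProduct_mulVec hN]

end SecondMoments

theorem lmmse_uniform_estimator_general {Ω : Type*} [MeasurableSpace Ω]
    (μ : Measure Ω) {m : ℕ}
    (N : Fin m → Ω → ℝ)
    (hN2 : ∀ i, MemLp (N i) 2 μ)
    (K₂ : Matrix (Fin m) (Fin m) ℝ)
    (hK₂ : K₂ = Matrix.of fun i j => ∫ ω, N i ω * N j ω ∂μ)
    (hK₂pos : K₂.PosDef)
    (ν : Fin m → ℝ) (lam : ℝ)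
    (K₁ : Matrix (Fin m) (Fin m) ℝ)
    (hK₁ : K₁ = K₂ + lam ^ 2 • Matrix.vecMulVec ν ν)
    (SNRa : ℝ) (hSNR : SNRa = K₁.det / K₂.det - 1) :
    ∃ w : Fin m → ℝ, ∀ X' : Ω → ℝ,
      Measurable X' → MemLp X' 2 μ →
      IndepFun X' (fun ω => fun i => N i ω) μ →
      (∫ ω, X' ω ∂μ) = 0 → (∫ ω, (X' ω) ^ 2 ∂μ) ≤ lam ^ 2 →
      (∫ ω, ((∑ i, w i * (ν i * X' ω + N i ω)) - X' ω) ^ 2 ∂μ)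
        ≤ lam ^ 2 / (1 + SNRa) := by
  have hK₁pos : K₁.PosDef := by
    simpa [hK₁] using
      hK₂pos.add_posSemidef ((posSemidef_vecMulVec_self_star ν).smul (sq_nonneg lam))
  have hK₁det : IsUnit K₁.det := hK₁pos.isUnit.map detMonoidHom
  set w := lam ^ 2 • K₁⁻¹ *ᵥ ν
  have hK₂eq : K₂ = K₁ - lam ^ 2 • vecMulVec ν ν := by rw [hK₁, add_sub_cancel_right]
  have hdet : K₂.det = K₁.det * (1 - ν ⬝ᵥ w) := by
    rw [hK₂eq]; exact det_sub_smul_vecMulVec hK₁det _ ν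
  have hK₂w : K₂ *ᵥ w = (lam ^ 2 * (1 - ν ⬝ᵥ w)) • ν := by
    rw [hK₂eq]; exact sub_smul_vecMulVec_mulVec_smul_inv_mulVec hK₁det _ ν
  have hbound : lam ^ 2 / (1 + SNRa) = lam ^ 2 * (1 - ν ⬝ᵥ w) := by
    rw [hSNR, add_sub_cancel, hdet, div_mul_cancel_left₀ hK₁det.ne_zero, div_inv_eq_mul]
  refine ⟨w, fun X _ hX hXN hX0 hXvar => ?_⟩
  have hquad : w ⬝ᵥ K₂ *ᵥ w = lam ^ 2 * (1 - ν ⬝ᵥ w) * (ν ⬝ᵥ w) := by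
    rw [hK₂w, dotProduct_smul, dotProduct_comm, smul_eq_mul]
  rw [integral_sq_linear_estimator_error hX hN2 hXN hX0, ← hK₂, hquad, hbound]
  calc (ν ⬝ᵥ w - 1) ^ 2 * ∫ ω, X ω ^ 2 ∂μ + lam ^ 2 * (1 - ν ⬝ᵥ w) * (ν ⬝ᵥ w)
      ≤ (ν ⬝ᵥ w - 1) ^ 2 * lam ^ 2 + lam ^ 2 * (1 - ν ⬝ᵥ w) * (ν ⬝ᵥ w) := by gcongr
    _ = lam ^ 2 * (1 - ν ⬝ᵥ w) := by ring

/-- A single linear estimator `w*` works uniformly for all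
zero-mean signals `X'` of variance at most `λ²` that are independent of the
zero-mean noise vector `N` (with positive-definite covariance `K₂`):
`E[(w*ᵀ(νX' + N) − X')²] ≤ λ²/(1 + SNR_a)` where
`K₁ = K₂ + λ²ννᵀ` and `SNR_a = det K₁ / det K₂ − 1`. -/
theorem lmmse_uniform_estimator {Ω : Type*} [MeasurableSpace Ω]
    (μ : Measure Ω) [IsProbabilityMeasure μ] {m : ℕ}
    (N : Fin m → Ω → ℝ)
    (hNm : ∀ i, Measurable (N i)) (hN2 : ∀ i, MemLp (N i) 2 μ)
    (hNmean : ∀ i, (∫ ω, N i ω ∂μ) = 0)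
    (K₂ : Matrix (Fin m) (Fin m) ℝ)
    (hK₂ : K₂ = Matrix.of fun i j => ∫ ω, N i ω * N j ω ∂μ)
    (hK₂pos : K₂.PosDef)
    (ν : Fin m → ℝ) (lam : ℝ) (hlam : 0 < lam)
    (K₁ : Matrix (Fin m) (Fin m) ℝ)
    (hK₁ : K₁ = K₂ + lam ^ 2 • Matrix.vecMulVec ν ν)
    (SNRa : ℝ) (hSNR : SNRa = K₁.det / K₂.det - 1) :
    ∃ w : Fin m → ℝ, ∀ X' : Ω → ℝ,
      Measurable X' → MemLp X' 2 μ →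
      IndepFun X' (fun ω => fun i => N i ω) μ →
      (∫ ω, X' ω ∂μ) = 0 → (∫ ω, (X' ω) ^ 2 ∂μ) ≤ lam ^ 2 →
      (∫ ω, ((∑ i, w i * (ν i * X' ω + N i ω)) - X' ω) ^ 2 ∂μ)
        ≤ lam ^ 2 / (1 + SNRa) :=
  lmmse_uniform_estimator_general μ N hN2 K₂ hK₂ hK₂pos ν lam K₁ hK₁ SNRa hSNR
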